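/- arXiv:1901.09456 — 2 statements merged into one kernel-verified Lean document; each statement's English description precedes it below -/
import Mathlib

section
/- Let n ≥ 2, let 1 ≤ k < n, let M be an n×n real symmetric positive-definite matrix, and let κ̂ > 1 satisfy κ(M) ≤ κ̂. Then Var(Y_k(M)) ≤ 6·(k(n−k)/n)·(log κ̂)². -/
open Matrix Real Finset

/-- The log-determinant of the principal submatrix of `M` indexed by `s`. -/
noncomputable def logMinor {n : ℕ} (M : Matrix (Fin n) (Fin n) ℝ) (s : Finset (Fin n)) : ℝ :=
  Real.log (M.submatrix (fun i : {x // x ∈ s} => (i : Fin n))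
    (fun i : {x // x ∈ s} => (i : Fin n))).det

/-- The mean of `Y_k(M)`, the log-minor of a uniformly random `k`-element index set. -/
noncomputable def meanLM {n : ℕ} (k : ℕ) (M : Matrix (Fin n) (Fin n) ℝ) : ℝ :=
  (∑ s ∈ Finset.powersetCard k (Finset.univ : Finset (Fin n)), logMinor M s) / (n.choose k)

/-- The variance of `Y_k(M)` under the uniform distribution on `k`-element index sets. -/
noncomputable def varLM {n : ℕ} (k : ℕ) (M : Matrix (Fin n) (Fin n) ℝ) : ℝ :=
  (∑ s ∈ Finset.powersetCard k (Finset.univ : Finset (Fin n)),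
    (logMinor M s - meanLM k M) ^ 2) / (n.choose k)

open Classical in
/-- `P(|Y_k(M) - E[Y_k(M)]| ≥ r)` under the uniform distribution on `k`-element index sets. -/
noncomputable def probDevLM {n : ℕ} (k : ℕ) (M : Matrix (Fin n) (Fin n) ℝ) (r : ℝ) : ℝ :=
  (((Finset.powersetCard k (Finset.univ : Finset (Fin n))).filter
      (fun s => r ≤ |logMinor M s - meanLM k M|)).card : ℝ) / (n.choose k)

/-- The largest eigenvalue `λ₁(M)` of a Hermitian matrix. -/
noncomputable def maxEig {n : ℕ} {M : Matrix (Fin n) (Fin n) ℝ} (hM : M.IsHermitian) : ℝ :=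
  ⨆ i, hM.eigenvalues i

/-- The smallest eigenvalue `λₙ(M)` of a Hermitian matrix. -/
noncomputable def minEig {n : ℕ} {M : Matrix (Fin n) (Fin n) ℝ} (hM : M.IsHermitian) : ℝ :=
  ⨅ i, hM.eigenvalues i

/-- The condition number `κ(M) = λ₁(M) / λₙ(M)` of a Hermitian matrix. -/
noncomputable def condNum {n : ℕ} {M : Matrix (Fin n) (Fin n) ℝ} (hM : M.IsHermitian) : ℝ :=
  maxEig hM / minEig hM

/-!
Adding an index `u` to an index set `B` multiplies the principal minor by the Schur complement
`M_uu - bᵀ M_B⁻¹ b`, which lies between `λₙ(M)` and `λ₁(M)`: it is at most `M_uu`, and it is the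
quadratic form of `M` at a vector with a unit coordinate. Hence exchanging one index changes
`Y_k(M)` by at most `c = log κ(M)`.

Any function `f` of the `k`-subsets of an `n`-set with this exchange property has variance at most
`c² k (n - k) / n`. By induction on the ground set `insert a V`: split the `k`-subsets according to
whether they contain `a` and apply the law of total variance. The two conditional variances are
bounded inductively, and the conditional means differ by at most `c`, since a uniform `k`-subset
of `V` is a uniform `(k - 1)`-subset `B` plus a uniform `u ∉ B`, which is paired with `insert a B`.
-/

open scoped BigOperators

section Expectation

variable {ι : Type*}

noncomputable def uniformVar (s : Finset ι) (f : ι → ℝ) : ℝ :=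
  𝔼 i ∈ s, (f i - 𝔼 j ∈ s, f j) ^ 2

theorem uniformVar_eq_expect_sq_sub_sq (s : Finset ι) (f : ι → ℝ) :
    uniformVar s f = 𝔼 i ∈ s, f i ^ 2 - (𝔼 i ∈ s, f i) ^ 2 := by
  rcases s.eq_empty_or_nonempty with rfl | hs
  · simp [uniformVar]
  simp only [uniformVar, sub_sq, expect_add_distrib, expect_sub_distrib, ← expect_mul,
    ← mul_expect, expect_const hs]
  ring

@[simp]
theorem uniformVar_singleton (a : ι) (f : ι → ℝ) : uniformVar {a} f = 0 := by
  simp [uniformVar]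

theorem uniformVar_image [DecidableEq ι] {κ : Type*} {g : κ → ι} {t : Finset κ}
    (hg : Set.InjOn g t) (f : ι → ℝ) :
    uniformVar (t.image g) f = uniformVar t fun x => f (g x) := by
  simp only [uniformVar, expect_image hg]

theorem uniformVar_union [DecidableEq ι] {s t : Finset ι} (h : Disjoint s t) (hs : s.Nonempty)
    (ht : t.Nonempty) (f : ι → ℝ) :
    uniformVar (s ∪ t) f =
      #s / (#s + #t) * uniformVar s f + #t / (#s + #t) * uniformVar t f +
        #s / (#s + #t) * (#t / (#s + #t)) * (𝔼 i ∈ s, f i - 𝔼 i ∈ t, f i) ^ 2 := by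
  have hs' : (0 : ℝ) < #s := by exact_mod_cast hs.card_pos
  have ht' : (0 : ℝ) < #t := by exact_mod_cast ht.card_pos
  simp only [uniformVar_eq_expect_sq_sub_sq, expect_eq_sum_div_card, sum_union h,
    card_union_of_disjoint h, Nat.cast_add]
  field_simp
  ring

theorem Finset.expect_sigma_of_card_eq {K : Type*} [Semifield K] [CharZero K] {κ : ι → Type*}
    (s : Finset ι) (t : ∀ i, Finset (κ i)) {r : ℕ} (ht : ∀ i ∈ s, #(t i) = r)
    (f : (Σ i, κ i) → K) :
    𝔼 x ∈ s.sigma t, f x = 𝔼 i ∈ s, 𝔼 j ∈ t i, f ⟨i, j⟩ := by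
  have hinner : ∀ i ∈ s, 𝔼 j ∈ t i, f ⟨i, j⟩ = (∑ j ∈ t i, f ⟨i, j⟩) / r := fun i hi => by
    rw [expect_eq_sum_div_card, ht i hi]
  rw [expect_eq_sum_div_card, card_sigma, sum_congr rfl ht, sum_const, sum_sigma,
    expect_eq_sum_div_card, sum_congr rfl hinner, ← sum_div, div_div, smul_eq_mul, Nat.cast_mul,
    mul_comm]

end Expectation

theorem Nat.cast_choose_div_choose_add_choose (m j : ℕ) (hj : j ≤ m) :
    (m.choose j : ℝ) / (m.choose (j + 1) + m.choose j) = (j + 1) / (m + 1) := by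
  have hpos : (0 : ℝ) < m.choose (j + 1) + m.choose j := by
    exact_mod_cast Nat.add_pos_right _ (Nat.choose_pos hj)
  have h : ((m : ℝ) + 1) * m.choose j = (m.choose j + m.choose (j + 1)) * (j + 1) := by
    exact_mod_cast Nat.choose_succ_succ' m j ▸ Nat.add_one_mul_choose_eq m j
  rw [div_eq_div_iff hpos.ne' (by positivity)]
  linear_combination h

theorem Nat.cast_choose_succ_div_choose_add_choose (m j : ℕ) (hj : j ≤ m) :
    (m.choose (j + 1) : ℝ) / (m.choose (j + 1) + m.choose j) = (m - j) / (m + 1) := by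
  have h := Nat.cast_choose_div_choose_add_choose m j hj
  have hpos : (0 : ℝ) < m.choose (j + 1) + m.choose j := by
    exact_mod_cast Nat.add_pos_right _ (Nat.choose_pos hj)
  field_simp at h ⊢
  linarith

theorem variance_recursion_le {m j C : ℝ} (hj : 0 ≤ j) (hjm : j + 1 ≤ m) (hC : 0 ≤ C) :
    (m - j) / (m + 1) * (C * (j + 1) * (m - (j + 1)) / m)
      + (j + 1) / (m + 1) * (C * j * (m - j) / m)
      + (m - j) / (m + 1) * ((j + 1) / (m + 1)) * C
      ≤ C * (j + 1) * (m + 1 - (j + 1)) / (m + 1) := by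
  have hm : 0 < m := by linarith
  have hmj : 0 ≤ m - j := by linarith
  -- the slack is `C (j + 1) (m - j) / (m (m + 1)²)`
  rw [← sub_nonneg]
  field_simp
  nlinarith [mul_nonneg (mul_nonneg hC (by linarith : 0 ≤ j + 1)) hmj]

section SwapBounded

variable {α : Type*} [DecidableEq α]

theorem Finset.expect_sigma_powersetCard_sdiff {K : Type*} [Semifield K] [CharZero K]
    (V : Finset α) (k : ℕ) (g : Finset α → K) :
    𝔼 x ∈ (V.powersetCard k).sigma (V \ ·), g (insert x.2 x.1) =
      𝔼 s ∈ V.powersetCard (k + 1), g s := by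
  have hpick : 𝔼 x ∈ (V.powersetCard (k + 1)).sigma id, g x.1 =
      𝔼 s ∈ V.powersetCard (k + 1), g s := by
    rw [expect_sigma_of_card_eq (κ := fun _ => α) _ id fun t ht => (mem_powersetCard.1 ht).2]
    exact expect_congr rfl fun t ht =>
      expect_const (card_pos.1 ((mem_powersetCard.1 ht).2 ▸ k.succ_pos)) (g t)
  rw [← hpick]
  refine expect_nbij' (fun x => ⟨insert x.2 x.1, x.2⟩) (fun y => ⟨y.1.erase y.2, y.2⟩)
    ?_ ?_ ?_ ?_ fun _ _ => rfl
  · rintro ⟨B, u⟩ hx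
    simp only [mem_sigma, mem_powersetCard, mem_sdiff, id] at hx ⊢
    exact ⟨⟨insert_subset hx.2.1 hx.1.1, by rw [card_insert_of_notMem hx.2.2, hx.1.2]⟩,
      mem_insert_self u B⟩
  · rintro ⟨t, u⟩ hy
    simp only [mem_sigma, mem_powersetCard, mem_sdiff, id] at hy ⊢
    exact ⟨⟨(erase_subset u t).trans hy.1.1, by rw [card_erase_of_mem hy.2, hy.1.2]; rfl⟩,
      hy.1.1 hy.2, notMem_erase u t⟩
  · rintro ⟨B, u⟩ hx
    simp only [mem_sigma, mem_sdiff] at hx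
    simp [erase_insert hx.2.2]
  · rintro ⟨t, u⟩ hy
    simp only [mem_sigma, id] at hy
    simp [insert_erase hy.2]

def SwapBounded (U : Finset α) (f : Finset α → ℝ) (c : ℝ) : Prop :=
  ∀ B ⊆ U, ∀ u ∈ U, ∀ v ∈ U, u ∉ B → v ∉ B → |f (insert u B) - f (insert v B)| ≤ c

variable {U V : Finset α} {f : Finset α → ℝ} {c : ℝ} {a : α}

theorem SwapBounded.mono (hf : SwapBounded U f c) (hVU : V ⊆ U) : SwapBounded V f c :=
  fun B hB u hu v hv => hf B (hB.trans hVU) u (hVU hu) v (hVU hv)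

theorem SwapBounded.comp_insert (hf : SwapBounded (insert a V) f c) (ha : a ∉ V) :
    SwapBounded V (fun s => f (insert a s)) c := by
  intro B hB u hu v hv huB hvB
  dsimp only
  rw [insert_comm, insert_comm a v]
  exact hf (insert a B) (insert_subset_insert a hB) u (mem_insert_of_mem hu) v
    (mem_insert_of_mem hv) (by grind) (by grind)

theorem SwapBounded.abs_expect_powersetCard_sub_le (hf : SwapBounded (insert a V) f c)
    (ha : a ∉ V) {k : ℕ} (hk : k < #V) :
    |𝔼 s ∈ V.powersetCard (k + 1), f s - 𝔼 s ∈ V.powersetCard k, f (insert a s)| ≤ c := by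
  set P := (V.powersetCard k).sigma (V \ ·)
  have hfibre : ∀ B ∈ V.powersetCard k, #(V \ B) = #V - k := fun B hB => by
    rw [mem_powersetCard] at hB
    rw [card_sdiff_of_subset hB.1, hB.2]
  have hfibre_nonempty : ∀ B ∈ V.powersetCard k, (V \ B).Nonempty := fun B hB => by
    rw [← card_pos, hfibre B hB]
    omega
  have hbase : 𝔼 x ∈ P, f (insert a x.1) = 𝔼 s ∈ V.powersetCard k, f (insert a s) := by
    rw [expect_sigma_of_card_eq _ _ hfibre]
    exact expect_congr rfl fun B hB => expect_const (hfibre_nonempty B hB) (f (insert a B))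
  have hP : P.Nonempty := by
    obtain ⟨B, hB⟩ := powersetCard_nonempty.2 hk.le
    obtain ⟨u, hu⟩ := hfibre_nonempty B hB
    exact ⟨⟨B, u⟩, mem_sigma.2 ⟨hB, hu⟩⟩
  rw [← expect_sigma_powersetCard_sdiff V k f, ← hbase, ← expect_sub_distrib]
  refine (abs_expect_le _ _).trans (expect_le hP fun x hx => ?_)
  simp only [mem_sigma, mem_powersetCard, mem_sdiff] at hx
  exact hf x.1 (hx.1.1.trans (subset_insert a V)) x.2 (mem_insert_of_mem hx.2.1) a
    (mem_insert_self a V) hx.2.2 fun h => ha (hx.1.1 h)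

theorem SwapBounded.uniformVar_powersetCard_le (hf : SwapBounded U f c) {k : ℕ} (hk : k ≤ #U) :
    uniformVar (U.powersetCard k) f ≤ c ^ 2 * k * (#U - k) / #U := by
  induction U using Finset.induction_on generalizing f k with
  | empty =>
    obtain rfl : k = 0 := by simpa using hk
    simp
  | @insert a V ha ih =>
    rw [card_insert_of_notMem ha] at hk ⊢
    rcases k with _ | j
    · simp
    rcases hk.eq_or_lt with hj | hj
    · rw [hj, ← card_insert_of_notMem ha, powersetCard_self]
      simp
    have hjV : j < #V := by omega
    have hinj : Set.InjOn (insert a) (V.powersetCard j : Set (Finset α)) :=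
      fun s hs t ht hst => by
        rw [← erase_insert (fun h => ha ((mem_powersetCard.1 hs).1 h)), hst,
          erase_insert (fun h => ha ((mem_powersetCard.1 ht).1 h))]
    have hdisj : Disjoint (V.powersetCard (j + 1)) ((V.powersetCard j).image (insert a)) := by
      refine disjoint_left.2 fun s hs hs' => ?_
      obtain ⟨B, -, rfl⟩ := mem_image.1 hs'
      exact ha ((mem_powersetCard.1 hs).1 (mem_insert_self a B))
    have hmean := hf.abs_expect_powersetCard_sub_le ha hjV
    have hδ : (𝔼 s ∈ V.powersetCard (j + 1), f s - 𝔼 s ∈ V.powersetCard j, f (insert a s)) ^ 2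
        ≤ c ^ 2 :=
      sq_le_sq' (abs_le.1 hmean).1 (abs_le.1 hmean).2
    have ih₀ := ih (hf.mono (subset_insert a V)) hjV
    have ih₁ := ih (hf.comp_insert ha) hjV.le
    have hjm : (j : ℝ) + 1 ≤ #V := by exact_mod_cast hjV
    have hmj : (0 : ℝ) ≤ #V - j := by linarith
    rw [powersetCard_succ_insert ha, uniformVar_union hdisj (powersetCard_nonempty.2 hjV)
      ((powersetCard_nonempty.2 hjV.le).image _), uniformVar_image hinj, expect_image hinj,
      card_image_of_injOn hinj, card_powersetCard, card_powersetCard,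
      Nat.cast_choose_div_choose_add_choose _ _ hjV.le,
      Nat.cast_choose_succ_div_choose_add_choose _ _ hjV.le]
    push_cast at ih₀ ⊢
    calc _ ≤ (#V - j) / (#V + 1) * (c ^ 2 * (j + 1) * (#V - (j + 1)) / #V)
          + (j + 1) / (#V + 1) * (c ^ 2 * j * (#V - j) / #V)
          + (#V - j) / (#V + 1) * ((j + 1) / (#V + 1)) * c ^ 2 := by gcongr
      _ ≤ _ := variance_recursion_le j.cast_nonneg hjm (sq_nonneg c)

end SwapBounded

section Schur

variable {κ : Type*} [Fintype κ] [DecidableEq κ] {A : Matrix κ κ ℝ} {B : Matrix κ Unit ℝ}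
  {D : Matrix Unit Unit ℝ}

theorem Matrix.PosDef.det_fromBlocks_eq (hA : A.PosDef) :
    (fromBlocks A B Bᴴ D).det = A.det * (D - Bᴴ * A⁻¹ * B) () () := by
  have : Invertible A := hA.isUnit.invertible
  rw [det_fromBlocks₁₁, invOf_eq_nonsing_inv, det_unique (D - _)]

theorem Matrix.PosDef.det_fromBlocks_le (hA : A.PosDef) {Λ : ℝ}
    (hΛ : (Λ • 1 - fromBlocks A B Bᴴ D).PosSemidef) :
    (fromBlocks A B Bᴴ D).det ≤ Λ * A.det := by
  have hBAB : 0 ≤ (Bᴴ * A⁻¹ * B) () () :=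
    (hA.inv.posSemidef.conjTranspose_mul_mul_same B).diag_nonneg
  have hD : D () () ≤ Λ := by simpa using hΛ.diag_nonneg (i := Sum.inr ())
  rw [hA.det_fromBlocks_eq, mul_comm Λ]
  exact mul_le_mul_of_nonneg_left (by simp only [sub_apply]; linarith) hA.det_pos.le

theorem Matrix.PosDef.le_det_fromBlocks (hA : A.PosDef) {m : ℝ} (hm : 0 ≤ m)
    (hm' : (fromBlocks A B Bᴴ D - m • 1).PosSemidef) :
    m * A.det ≤ (fromBlocks A B Bᴴ D).det := by
  have : Invertible A := hA.isUnit.invertible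
  set y : Unit → ℝ := fun _ => 1
  set z := Sum.elim (-((A⁻¹ * B) *ᵥ y)) y
  have hquad : z ⬝ᵥ fromBlocks A B Bᴴ D *ᵥ z = (D - Bᴴ * A⁻¹ * B) () () := by
    have := schur_complement_eq₁₁ B D (-((A⁻¹ * B) *ᵥ y)) y hA.1
    simp only [neg_add_cancel, star_trivial, zero_vecMul, zero_dotProduct, zero_add] at this
    rw [dotProduct_mulVec, this]
    simp [y, dotProduct, vecMul]
  have hz : 1 ≤ z ⬝ᵥ z := by
    simp only [z, y, dotProduct, Fintype.sum_sum_type, Sum.elim_inl, Sum.elim_inr, univ_unique,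
      sum_singleton, mul_one, le_add_iff_nonneg_left]
    exact sum_nonneg fun i _ => mul_self_nonneg _
  have hmz := hm'.dotProduct_mulVec_nonneg z
  simp only [star_trivial, sub_mulVec, dotProduct_sub, smul_mulVec, one_mulVec, dotProduct_smul,
    smul_eq_mul, sub_nonneg] at hmz
  rw [hA.det_fromBlocks_eq, mul_comm m]
  refine mul_le_mul_of_nonneg_left ?_ hA.det_pos.le
  nlinarith

end Schur

section PrincipalMinor

variable {α : Type*} {M : Matrix α α ℝ}

theorem Matrix.IsHermitian.submatrix_sumElim {l m : Type*} (hM : M.IsHermitian) (r : l → α)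
    (c : m → α) :
    M.submatrix (Sum.elim r c) (Sum.elim r c) =
      Matrix.fromBlocks (M.submatrix r r) (M.submatrix r c) (M.submatrix r c)ᴴ
        (M.submatrix c c) := by
  rw [conjTranspose_submatrix, hM.eq]
  ext (i | i) (j | j) <;> rfl

theorem Matrix.PosSemidef.submatrix_sub_smul_one [DecidableEq α] {l : Type*} [DecidableEq l]
    {m : ℝ} (hm : (M - m • 1).PosSemidef) {e : l → α} (he : e.Injective) :
    (M.submatrix e e - m • 1).PosSemidef := by
  rw [← submatrix_one _ he]
  exact hm.submatrix e

theorem Matrix.PosSemidef.smul_one_sub_submatrix [DecidableEq α] {l : Type*} [DecidableEq l]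
    {Λ : ℝ} (hΛ : (Λ • 1 - M).PosSemidef) {e : l → α} (he : e.Injective) :
    (Λ • 1 - M.submatrix e e).PosSemidef := by
  rw [← submatrix_one _ he]
  exact hΛ.submatrix e

variable {B : Finset α} {u : α}

theorem Finset.sumElim_val_const_injective (hu : u ∉ B) :
    (Sum.elim ((↑) : B → α) fun _ : Unit => u).Injective :=
  Subtype.val_injective.sumElim (fun _ _ _ => rfl) fun x _ h => hu (h ▸ x.2)

variable [DecidableEq α]

theorem Matrix.det_submatrix_insert (hu : u ∉ B) :
    (M.submatrix ((↑) : ↥(insert u B : Finset α) → α) (↑)).det =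
      (M.submatrix (Sum.elim ((↑) : B → α) fun _ : Unit => u)
        (Sum.elim ((↑) : B → α) fun _ : Unit => u)).det := by
  let e : ↥(insert u B : Finset α) ≃ B ⊕ Unit :=
    (subtypeInsertEquivOption hu).trans (Equiv.optionEquivSumPUnit _)
  have he : Sum.elim ((↑) : B → α) (fun _ : Unit => u) ∘ e = (↑) := by
    ext ⟨x, hx⟩
    by_cases h : x = u
    · subst h; simp [e, subtypeInsertEquivOption]
    · simp [e, subtypeInsertEquivOption, h]
  rw [← he, ← submatrix_submatrix, det_submatrix_equiv_self]

theorem Matrix.PosDef.det_submatrix_insert_le (hM : M.PosDef) {Λ : ℝ}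
    (hΛ : (Λ • 1 - M).PosSemidef) (hu : u ∉ B) :
    (M.submatrix ((↑) : ↥(insert u B : Finset α) → α) (↑)).det ≤
      Λ * (M.submatrix ((↑) : B → α) (↑)).det := by
  rw [det_submatrix_insert hu, hM.1.submatrix_sumElim]
  apply (hM.submatrix Subtype.val_injective).det_fromBlocks_le
  rw [← hM.1.submatrix_sumElim]
  exact hΛ.smul_one_sub_submatrix (sumElim_val_const_injective hu)

theorem Matrix.PosDef.le_det_submatrix_insert (hM : M.PosDef) {m : ℝ} (hm : 0 ≤ m)
    (hm' : (M - m • 1).PosSemidef) (hu : u ∉ B) :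
    m * (M.submatrix ((↑) : B → α) (↑)).det ≤
      (M.submatrix ((↑) : ↥(insert u B : Finset α) → α) (↑)).det := by
  rw [det_submatrix_insert hu, hM.1.submatrix_sumElim]
  apply (hM.submatrix Subtype.val_injective).le_det_fromBlocks hm
  rw [← hM.1.submatrix_sumElim]
  exact hm'.submatrix_sub_smul_one (sumElim_val_const_injective hu)

end PrincipalMinor

section Eigenvalues

variable {ι : Type*} [Fintype ι] [DecidableEq ι] {M : Matrix ι ι ℝ}

theorem Matrix.IsHermitian.posSemidef_sub_smul_one (hM : M.IsHermitian) {c : ℝ}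
    (hc : ∀ i, c ≤ hM.eigenvalues i) : (M - c • 1).PosSemidef := by
  rw [posSemidef_iff_isHermitian_and_spectrum_nonneg, ← Algebra.algebraMap_eq_smul_one,
    ← spectrum.sub_singleton_eq, hM.spectrum_real_eq_range_eigenvalues]
  refine ⟨hM.sub (by simp [IsHermitian, Algebra.algebraMap_eq_smul_one]), ?_⟩
  rintro _ ⟨_, ⟨i, rfl⟩, _, rfl, rfl⟩
  simpa using hc i

theorem Matrix.IsHermitian.posSemidef_smul_one_sub (hM : M.IsHermitian) {c : ℝ}
    (hc : ∀ i, hM.eigenvalues i ≤ c) : (c • 1 - M).PosSemidef := by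
  rw [posSemidef_iff_isHermitian_and_spectrum_nonneg, ← Algebra.algebraMap_eq_smul_one,
    ← spectrum.singleton_sub_eq, hM.spectrum_real_eq_range_eigenvalues]
  refine ⟨(by simp [IsHermitian, Algebra.algebraMap_eq_smul_one] : IsHermitian _).sub hM, ?_⟩
  rintro _ ⟨_, rfl, _, ⟨i, rfl⟩, rfl⟩
  simpa using hc i

end Eigenvalues

section LogMinor

variable {n : ℕ} {M : Matrix (Fin n) (Fin n) ℝ}

theorem minEig_le_eigenvalues (hM : M.IsHermitian) (i : Fin n) : minEig hM ≤ hM.eigenvalues i :=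
  ciInf_le (Set.finite_range _).bddBelow i

theorem eigenvalues_le_maxEig (hM : M.IsHermitian) (i : Fin n) : hM.eigenvalues i ≤ maxEig hM :=
  le_ciSup (Set.finite_range _).bddAbove i

theorem minEig_pos [NeZero n] (hM : M.PosDef) : 0 < minEig hM.1 := by
  obtain ⟨i, hi⟩ := exists_eq_ciInf_of_finite (f := hM.1.eigenvalues)
  rw [minEig, ← hi]
  exact hM.eigenvalues_pos i

theorem minEig_le_maxEig [NeZero n] (hM : M.IsHermitian) : minEig hM ≤ maxEig hM :=
  (minEig_le_eigenvalues hM 0).trans (eigenvalues_le_maxEig hM 0)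

theorem one_le_condNum [NeZero n] (hM : M.PosDef) : 1 ≤ condNum hM.1 :=
  (one_le_div (minEig_pos hM)).2 (minEig_le_maxEig hM.1)

variable {B : Finset (Fin n)} {u : Fin n}

theorem log_minEig_le_logMinor_insert_sub (hM : M.PosDef) (hu : u ∉ B) :
    Real.log (minEig hM.1) ≤ logMinor M (insert u B) - logMinor M B := by
  have : NeZero n := ⟨u.pos.ne'⟩
  have hB := (hM.submatrix (Subtype.val_injective (p := (· ∈ B)))).det_pos
  have hBu := (hM.submatrix (Subtype.val_injective (p := (· ∈ insert u B)))).det_pos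
  rw [logMinor, logMinor, ← Real.log_div hBu.ne' hB.ne']
  refine Real.log_le_log (minEig_pos hM) ((le_div_iff₀ hB).2 ?_)
  exact hM.le_det_submatrix_insert (minEig_pos hM).le
    (hM.1.posSemidef_sub_smul_one (minEig_le_eigenvalues hM.1)) hu

theorem logMinor_insert_sub_le_log_maxEig (hM : M.PosDef) (hu : u ∉ B) :
    logMinor M (insert u B) - logMinor M B ≤ Real.log (maxEig hM.1) := by
  have hB := (hM.submatrix (Subtype.val_injective (p := (· ∈ B)))).det_pos
  have hBu := (hM.submatrix (Subtype.val_injective (p := (· ∈ insert u B)))).det_pos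
  rw [logMinor, logMinor, ← Real.log_div hBu.ne' hB.ne']
  refine Real.log_le_log (div_pos hBu hB) ((div_le_iff₀ hB).2 ?_)
  exact hM.det_submatrix_insert_le (hM.1.posSemidef_smul_one_sub (eigenvalues_le_maxEig hM.1)) hu

theorem abs_logMinor_insert_sub_insert_le (hM : M.PosDef) {v : Fin n} (hu : u ∉ B)
    (hv : v ∉ B) :
    |logMinor M (insert u B) - logMinor M (insert v B)| ≤ Real.log (condNum hM.1) := by
  have : NeZero n := ⟨u.pos.ne'⟩
  have hmax := (minEig_pos hM).trans_le (minEig_le_maxEig hM.1)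
  rw [condNum, Real.log_div hmax.ne' (minEig_pos hM).ne', abs_sub_le_iff]
  have := log_minEig_le_logMinor_insert_sub hM hu
  have := log_minEig_le_logMinor_insert_sub hM hv
  have := logMinor_insert_sub_le_log_maxEig hM hu
  have := logMinor_insert_sub_le_log_maxEig hM hv
  constructor <;> linarith

theorem varLM_eq_uniformVar (k : ℕ) (M : Matrix (Fin n) (Fin n) ℝ) :
    varLM k M = uniformVar (powersetCard k univ) (logMinor M) := by
  simp only [varLM, meanLM, uniformVar, expect_eq_sum_div_card, card_powersetCard, card_univ,
    Fintype.card_fin]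

end LogMinor

theorem log_minor_variance_bound_general {n k : ℕ} (hkn : k < n)
    (M : Matrix (Fin n) (Fin n) ℝ) (hM : M.PosDef) (khat : ℝ)
    (hcond : condNum hM.1 ≤ khat) :
    varLM k M ≤ 6 * ((k : ℝ) * ((n : ℝ) - (k : ℝ)) / (n : ℝ)) * (Real.log khat) ^ 2 := by
  have : NeZero n := ⟨by omega⟩
  set c := Real.log (condNum hM.1)
  have hc : 0 ≤ c := Real.log_nonneg (one_le_condNum hM)
  have hswap : SwapBounded univ (logMinor M) c := fun B _ u _ v _ hu hv =>
    abs_logMinor_insert_sub_insert_le hM hu hv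
  have hvar := hswap.uniformVar_powersetCard_le (k := k) (by simp [hkn.le])
  rw [card_univ, Fintype.card_fin] at hvar
  have hlog : c ^ 2 ≤ Real.log khat ^ 2 :=
    pow_le_pow_left₀ hc (Real.log_le_log (by linarith [one_le_condNum hM]) hcond) 2
  have hweight : 0 ≤ (k : ℝ) * (n - k) / n := by
    have : (k : ℝ) ≤ n := by exact_mod_cast hkn.le
    have : 0 ≤ (n : ℝ) - k := by linarith
    positivity
  rw [varLM_eq_uniformVar]
  calc _ ≤ c ^ 2 * k * (n - k) / n := hvar
    _ = 1 * ((k : ℝ) * (n - k) / n) * c ^ 2 := by ring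
    _ ≤ 6 * ((k : ℝ) * (n - k) / n) * Real.log khat ^ 2 := by gcongr; norm_num

theorem log_minor_variance_bound {n k : ℕ} (hn : 2 ≤ n) (hk1 : 1 ≤ k) (hkn : k < n)
    (M : Matrix (Fin n) (Fin n) ℝ) (hM : M.PosDef) (khat : ℝ) (hkhat : 1 < khat)
    (hcond : condNum hM.1 ≤ khat) :
    varLM k M ≤ 6 * ((k : ℝ) * ((n : ℝ) - (k : ℝ)) / (n : ℝ)) * (Real.log khat) ^ 2 :=
  log_minor_variance_bound_general hkn M hM khat hcond
end

section
/- Let n = 2ℓ be even with ℓ ≥ 1, let κ̂ > 1, and let D be the n×n diagonal matrix whose first ℓ diagonal entries equal κ̂ and whose remaining ℓ diagonal entries equal 1. Then for every 1 ≤ k ≤ n, Var(Y_k(D)) = (k/4)·((n−k)/(n−1))·(log κ̂)²; in particular, the variance bound Var ≤ (k/4)·((n−k)/(n−1))·(log κ̂)² for diagonal positive-definite matrices with condition number at most κ̂ is attained by D. -/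
open Matrix Real Finset

/-
`log det D_I = ∑ i ∈ I, log dᵢ` for a positive diagonal `D`, so `Y_k(D)` is the sum of a sample of
size `k` drawn without replacement from the population `(log dᵢ)ᵢ`. Counting the `k`-sets that
contain one or two given indices gives its first two moments, hence the classical variance
`k σ² (n - k) / (n - 1)` with `σ²` the population variance. For the matrix `D` of the statement the
population is half `log κ̂` and half `0`, so `σ² = (log κ̂)² / 4`.
-/

section Sampling

variable {α : Type*} [Fintype α] [DecidableEq α]

-- Falling factorials keep this valid for every `k`, with no truncated subtraction.
theorem descFactorial_mul_card_filter_powersetCard_superset (t : Finset α) (k : ℕ) :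
    (Fintype.card α).descFactorial #t * #{s ∈ powersetCard k univ | t ⊆ s} =
      k.descFactorial #t * (Fintype.card α).choose k := by
  rcases lt_or_ge k #t with hkt | htk
  · have : #{s ∈ powersetCard k (univ : Finset α) | t ⊆ s} = 0 := by
      refine card_eq_zero.2 (filter_eq_empty_iff.2 fun s hs hts => ?_)
      have := card_le_card hts
      rw [(mem_powersetCard.1 hs).2] at this
      omega
    rw [this, Nat.descFactorial_eq_zero_iff_lt.2 hkt]; simp
  · rw [card_filter_powersetCard_subset t univ k (subset_univ t) htk, card_univ,
      Nat.descFactorial_eq_factorial_mul_choose, Nat.descFactorial_eq_factorial_mul_choose,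
      mul_assoc, ← Nat.choose_mul htk]
    ring

variable {R : Type*} [CommRing R]

theorem card_mul_card_filter_powersetCard_mem (i : α) (k : ℕ) :
    (Fintype.card α : R) * #{s ∈ powersetCard k univ | i ∈ s} =
      k * (Fintype.card α).choose k := by
  simpa using congrArg (Nat.cast : ℕ → R) (descFactorial_mul_card_filter_powersetCard_superset {i} k)

theorem card_mul_card_sub_one_mul_card_filter_powersetCard_mem_mem (i j : α) (k : ℕ) :
    (Fintype.card α : R) * (Fintype.card α - 1) * #{s ∈ powersetCard k univ | i ∈ s ∧ j ∈ s} =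
      k * (k - 1) * (Fintype.card α).choose k +
        if i = j then (k : R) * (Fintype.card α - k) * (Fintype.card α).choose k else 0 := by
  by_cases hij : i = j
  · subst hij
    simp only [and_self, if_true]
    linear_combination ((Fintype.card α : R) - 1) * card_mul_card_filter_powersetCard_mem (R := R) i k
  · have h := descFactorial_mul_card_filter_powersetCard_superset {i, j} k
    rw [card_pair hij] at h
    simp only [insert_subset_iff, singleton_subset_iff] at h
    have h' := congrArg (Nat.cast : ℕ → R) h
    push_cast [Nat.cast_descFactorial_two] at h'
    rw [if_neg hij, add_zero]
    exact h'

theorem card_mul_sum_powersetCard_sum (w : α → R) (k : ℕ) :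
    (Fintype.card α : R) * ∑ s ∈ powersetCard k univ, ∑ i ∈ s, w i =
      k * (Fintype.card α).choose k * ∑ i, w i := by
  rw [sum_congr rfl fun s _ => (sum_ite_mem_eq s w).symm, sum_comm, mul_sum, mul_sum]
  refine sum_congr rfl fun i _ => ?_
  rw [← sum_filter, sum_const, nsmul_eq_mul, ← mul_assoc, card_mul_card_filter_powersetCard_mem]

theorem card_mul_card_sub_one_mul_sum_powersetCard_sq_sum (w : α → R) (k : ℕ) :
    (Fintype.card α : R) * (Fintype.card α - 1) * ∑ s ∈ powersetCard k univ, (∑ i ∈ s, w i) ^ 2 =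
      (Fintype.card α).choose k *
        (k * (k - 1) * (∑ i, w i) ^ 2 + k * (Fintype.card α - k) * ∑ i, w i ^ 2) := by
  have hsq : ∀ s : Finset α, (∑ i ∈ s, w i) ^ 2 =
      ∑ i, ∑ j, if i ∈ s ∧ j ∈ s then w i * w j else 0 := by
    intro s
    rw [sq, sum_mul_sum, ← sum_ite_mem_eq]
    refine sum_congr rfl fun i _ => ?_
    rw [← sum_ite_mem_eq]
    split_ifs <;> simp_all
  rw [sum_congr rfl fun s _ => hsq s, sum_comm, mul_sum]
  have hrow : ∀ i, (Fintype.card α : R) * (Fintype.card α - 1) *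
      ∑ s ∈ powersetCard k univ, ∑ j, (if i ∈ s ∧ j ∈ s then w i * w j else 0) =
      ∑ j, (k * (k - 1) * (Fintype.card α).choose k +
        if i = j then (k : R) * (Fintype.card α - k) * (Fintype.card α).choose k else 0) *
        (w i * w j) := fun i => by
    rw [sum_comm, mul_sum]
    refine sum_congr rfl fun j _ => ?_
    rw [← sum_filter, sum_const, nsmul_eq_mul, ← mul_assoc,
      card_mul_card_sub_one_mul_card_filter_powersetCard_mem_mem]
  simp_rw [hrow, add_mul, sum_add_distrib, ite_mul, zero_mul, sum_ite_eq, mem_univ, if_true, ← mul_sum,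
    ← sum_mul, ← sq]
  ring

end Sampling

theorem varLM_eq_sub_meanLM_sq {n k : ℕ} (M : Matrix (Fin n) (Fin n) ℝ) (hkn : k ≤ n) :
    varLM k M = (∑ s ∈ powersetCard k univ, logMinor M s ^ 2) / n.choose k - meanLM k M ^ 2 := by
  have hC : (n.choose k : ℝ) ≠ 0 := by exact_mod_cast (Nat.choose_pos hkn).ne'
  have hcard : #(powersetCard k (univ : Finset (Fin n))) = n.choose k := by simp
  unfold varLM meanLM
  simp only [sub_sq, sum_add_distrib, sum_sub_distrib, ← sum_mul, ← mul_sum, sum_const, hcard,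
    nsmul_eq_mul]
  field_simp
  ring

theorem varLM_of_logMinor_eq_sum {n k : ℕ} (M : Matrix (Fin n) (Fin n) ℝ) (w : Fin n → ℝ)
    (hM : ∀ s, logMinor M s = ∑ i ∈ s, w i) (hkn : k ≤ n) (hn : 1 < n) :
    varLM k M = k * (n - k) / (n - 1) * (∑ i, w i ^ 2 / n - (∑ i, w i / n) ^ 2) := by
  have hC : (n.choose k : ℝ) ≠ 0 := by exact_mod_cast (Nat.choose_pos hkn).ne'
  have hn0 : (n : ℝ) ≠ 0 := by positivity
  have hn1 : (n : ℝ) - 1 ≠ 0 := sub_ne_zero.2 (by exact_mod_cast hn.ne')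
  have h1 : ∑ s ∈ powersetCard k univ, ∑ i ∈ s, w i = k * n.choose k * (∑ i, w i) / n := by
    rw [eq_div_iff hn0, mul_comm]
    simpa using card_mul_sum_powersetCard_sum w k
  have h2 : ∑ s ∈ powersetCard k univ, (∑ i ∈ s, w i) ^ 2 =
      n.choose k * (k * (k - 1) * (∑ i, w i) ^ 2 + k * (n - k) * ∑ i, w i ^ 2) / (n * (n - 1)) := by
    rw [eq_div_iff (mul_ne_zero hn0 hn1), mul_comm]
    simpa using card_mul_card_sub_one_mul_sum_powersetCard_sq_sum w k
  rw [varLM_eq_sub_meanLM_sq M hkn, meanLM]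
  simp only [hM]
  rw [h1, h2, ← sum_div, ← sum_div]
  field_simp
  ring

theorem logMinor_diagonal {n : ℕ} (d : Fin n → ℝ) (hd : ∀ i, d i ≠ 0) (s : Finset (Fin n)) :
    logMinor (diagonal d) s = ∑ i ∈ s, Real.log (d i) := by
  rw [logMinor, submatrix_diagonal _ _ Subtype.coe_injective, det_diagonal]
  exact (congrArg Real.log (prod_coe_sort s d)).trans (Real.log_prod fun i _ => hd i)

theorem varLM_diagonal {n k : ℕ} (d : Fin n → ℝ) (hd : ∀ i, d i ≠ 0) (hkn : k ≤ n) (hn : 1 < n) :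
    varLM k (diagonal d) = k * (n - k) / (n - 1) *
      (∑ i, Real.log (d i) ^ 2 / n - (∑ i, Real.log (d i) / n) ^ 2) :=
  varLM_of_logMinor_eq_sum _ _ (logMinor_diagonal d hd) hkn hn

theorem diag_variance_bound_sharp_general {ℓ : ℕ} (khat : ℝ) (hkhat : 1 < khat)
    (D : Matrix (Fin (2 * ℓ)) (Fin (2 * ℓ)) ℝ)
    (hD : D = Matrix.diagonal (fun i : Fin (2 * ℓ) => if (i : ℕ) < ℓ then khat else 1)) :
    ∀ k : ℕ, 1 ≤ k → k ≤ 2 * ℓ →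
      varLM k D =
        ((k : ℝ) / 4) * (((2 * ℓ : ℕ) : ℝ) - (k : ℝ)) / (((2 * ℓ : ℕ) : ℝ) - 1) *
          (Real.log khat) ^ 2 := by
  intro k hk1 hk2
  have hd : ∀ i : Fin (2 * ℓ), (if (i : ℕ) < ℓ then khat else 1) ≠ 0 := fun i => by
    split_ifs <;> linarith
  rw [hD, varLM_diagonal _ hd hk2 (by omega)]
  simp only [apply_ite Real.log, Real.log_one, ite_pow, ite_div, zero_pow two_ne_zero, zero_div,
    ← sum_filter, sum_const, Fin.card_filter_val_lt, min_eq_right (by omega : ℓ ≤ 2 * ℓ),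
    nsmul_eq_mul]
  have hℓ : (ℓ : ℝ) ≠ 0 := by exact_mod_cast (show ℓ ≠ 0 by omega)
  push_cast
  field_simp
  ring

theorem diag_variance_bound_sharp {ℓ : ℕ} (hℓ : 1 ≤ ℓ) (khat : ℝ) (hkhat : 1 < khat)
    (D : Matrix (Fin (2 * ℓ)) (Fin (2 * ℓ)) ℝ)
    (hD : D = Matrix.diagonal (fun i : Fin (2 * ℓ) => if (i : ℕ) < ℓ then khat else 1)) :
    ∀ k : ℕ, 1 ≤ k → k ≤ 2 * ℓ →
      varLM k D =
        ((k : ℝ) / 4) * (((2 * ℓ : ℕ) : ℝ) - (k : ℝ)) / (((2 * ℓ : ℕ) : ℝ) - 1) *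
          (Real.log khat) ^ 2 :=
  diag_variance_bound_sharp_general khat hkhat D hD
end
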